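/- Let c₀ ∈ (1,∞) be the unique zero of ψ(t) = (t+1)ln(t+1) + (t−1)ln(t−1) − 2t in (1,∞). Let c > c₀, M > 0, and define r : ℝ → (0,∞) by r(x) := max{c|x|, M}. Then there exists α ∈ (0,1) such that the function x ↦ r(x)^{−α} is (λ,r)-supermedian on ℝ, i.e. (1/(2r(x)))∫_{x−r(x)}^{x+r(x)} r(s)^{−α} ds ≤ r(x)^{−α} for every x ∈ ℝ. -/

import Mathlib

/-!
Write `r s = max (c|s|) M`. Where `r x = M` the integrand is everywhere at most
`M^{-α} = r(x)^{-α}`. Where `r x = c|x| > M`, the bound `r(s)^{-α} ≤ (c|s|)^{-α}` integrates to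
`∫ ≤ c^{-α} |x|^{1-α} ((c+1)^{1-α} + (c-1)^{1-α}) / (1-α)`, so it suffices that
`g α = (c+1)^{1-α} + (c-1)^{1-α} - 2c(1-α) ≤ 0`. Since `g 0 = 0` and `g'(0) = -ψ(c)`, this holds
for small `α > 0` as soon as `ψ(c) > 0`, which is the case for `c > c₀` because `ψ < 0` on
`(1, √2]` and `ψ'(t) = log (t² - 1) > 0` on `(√2, ∞)`.
-/

open Filter MeasureTheory

/-- `ψ(t) = (t+1)ln(t+1) + (t-1)ln(t-1) - 2t`. -/
noncomputable def psi (t : ℝ) : ℝ :=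
  (t + 1) * Real.log (t + 1) + (t - 1) * Real.log (t - 1) - 2 * t

open Topology Set

lemma hasDerivAt_psi {t : ℝ} (ht : 1 < t) :
    HasDerivAt psi (Real.log (t + 1) + Real.log (t - 1)) t := by
  have h_add : HasDerivAt (fun t : ℝ => t + 1) 1 t := (hasDerivAt_id t).add_const 1
  have h_sub : HasDerivAt (fun t : ℝ => t - 1) 1 t := (hasDerivAt_id t).sub_const 1
  have hlog_add := (Real.hasDerivAt_log (by linarith)).comp t h_add
  have hlog_sub := (Real.hasDerivAt_log (by linarith)).comp t h_sub
  refine (((h_add.mul hlog_add).add (h_sub.mul hlog_sub)).sub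
    ((hasDerivAt_id t).const_mul 2)).congr_deriv ?_
  field_simp [show t + 1 ≠ 0 by linarith, show t - 1 ≠ 0 by linarith]
  simp only [Function.comp_apply]
  ring

lemma psi_neg_of_sq_le_two {t : ℝ} (ht : 1 < t) (ht2 : t ^ 2 ≤ 2) : psi t < 0 := by
  have hlog_add : Real.log (t + 1) < 1 := by
    rw [Real.log_lt_iff_lt_exp (by linarith)]
    nlinarith [Real.exp_one_gt_d9]
  have hlog_sub : Real.log (t - 1) ≤ 0 := Real.log_nonpos (by linarith) (by nlinarith)
  have : (t + 1) * Real.log (t + 1) < t + 1 := by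
    nlinarith [Real.log_nonneg (show (1 : ℝ) ≤ t + 1 by linarith)]
  unfold psi
  nlinarith

lemma strictMonoOn_psi : StrictMonoOn psi (Ici √2) := by
  have one_lt {t : ℝ} (ht : √2 ≤ t) : 1 < t :=
    ((Real.lt_sqrt zero_le_one).2 (by norm_num)).trans_le ht
  refine strictMonoOn_of_deriv_pos (convex_Ici _)
    (fun t ht => (hasDerivAt_psi (one_lt ht)).continuousAt.continuousWithinAt) fun t ht => ?_
  rw [interior_Ici] at ht
  have ht1 := one_lt ht.le
  have ht2 : 2 < t ^ 2 := (Real.sqrt_lt' (by linarith)).1 ht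
  rw [(hasDerivAt_psi ht1).deriv, ← Real.log_mul (by linarith) (by linarith)]
  exact Real.log_pos (by nlinarith)

lemma psi_pos_of_lt {c₀ c : ℝ} (hc₀1 : 1 < c₀) (hc₀ : psi c₀ = 0) (hc : c₀ < c) :
    0 < psi c := by
  have hsqrt : √2 < c₀ := by
    refine (Real.sqrt_lt' (by linarith)).2 (not_le.1 fun h => ?_)
    exact (psi_neg_of_sq_le_two hc₀1 h).ne hc₀
  rw [← hc₀]
  exact strictMonoOn_psi hsqrt.le (hsqrt.trans hc).le hc

lemma HasDerivAt.eventually_nhdsGT_lt {f : ℝ → ℝ} {f' a : ℝ} (hf : HasDerivAt f f' a)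
    (hf' : f' < 0) : ∀ᶠ x in 𝓝[>] a, f x < f a := by
  filter_upwards [hf.hasDerivWithinAt.limsup_slope_le' (lt_irrefl a) hf', self_mem_nhdsWithin]
    with x hslope hx
  exact (slope_neg_iff_of_le (le_of_lt hx)).1 hslope

lemma hasDerivAt_rpow_one_sub_zero {a : ℝ} (ha : 0 < a) :
    HasDerivAt (fun α : ℝ => a ^ (1 - α)) (-(a * Real.log a)) 0 :=
  ((Real.hasStrictDerivAt_const_rpow ha (1 - 0)).hasDerivAt.comp 0
    ((hasDerivAt_id (0 : ℝ)).const_sub 1)).congr_deriv (by simp)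

lemma exists_rpow_one_sub_add_rpow_one_sub_le {c : ℝ} (hc : 1 < c) (hψ : 0 < psi c) :
    ∃ α : ℝ, 0 < α ∧ α < 1 ∧ (c + 1) ^ (1 - α) + (c - 1) ^ (1 - α) ≤ 2 * c * (1 - α) := by
  have hg : HasDerivAt (fun α : ℝ => (c + 1) ^ (1 - α) + (c - 1) ^ (1 - α) - 2 * c * (1 - α))
      (-psi c) 0 := by
    refine (((hasDerivAt_rpow_one_sub_zero (by linarith)).add
      (hasDerivAt_rpow_one_sub_zero (by linarith))).sub
      (((hasDerivAt_id (0 : ℝ)).const_sub 1).const_mul (2 * c))).congr_deriv ?_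
    unfold psi
    ring
  obtain ⟨α, hlt, hα⟩ :=
    ((hg.eventually_nhdsGT_lt (neg_neg_of_pos hψ)).and (Ioo_mem_nhdsGT zero_lt_one)).exists
  refine ⟨α, hα.1, hα.2, ?_⟩
  simp only [sub_zero, Real.rpow_one, mul_one] at hlt
  linarith

section Integral

variable {c M α : ℝ}

lemma continuous_max_mul_abs_rpow (hM : 0 < M) :
    Continuous fun s : ℝ => max (c * |s|) M ^ (-α) :=
  ((continuous_const.mul continuous_abs).max continuous_const).rpow_const
    fun _ => Or.inl (hM.trans_le (le_max_right _ _)).ne'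

lemma integral_max_mul_abs_rpow_le_mul (hM : 0 < M) (hα : 0 ≤ α) {a b : ℝ} (hab : a ≤ b) :
    ∫ s in a..b, max (c * |s|) M ^ (-α) ≤ (b - a) * M ^ (-α) := by
  refine (intervalIntegral.integral_mono_on hab
    ((continuous_max_mul_abs_rpow hM).intervalIntegrable _ _) intervalIntegrable_const
    fun s _ => ?_).trans_eq (by rw [intervalIntegral.integral_const, smul_eq_mul])
  exact Real.rpow_le_rpow_of_nonpos hM (le_max_right _ _) (by linarith)

lemma integral_zero_max_mul_abs_rpow_le (hc : 0 < c) (hM : 0 < M) (hα0 : 0 ≤ α) (hα1 : α < 1)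
    {b : ℝ} (hb : 0 ≤ b) :
    ∫ s in (0 : ℝ)..b, max (c * |s|) M ^ (-α) ≤ c ^ (-α) * (b ^ (1 - α) / (1 - α)) := by
  have hle : ∀ s ∈ Ioo 0 b, max (c * |s|) M ^ (-α) ≤ c ^ (-α) * s ^ (-α) := fun s hs => by
    rw [← Real.mul_rpow hc.le hs.1.le]
    exact Real.rpow_le_rpow_of_nonpos (mul_pos hc hs.1)
      (le_max_of_le_left (by rw [abs_of_pos hs.1])) (by linarith)
  refine (intervalIntegral.integral_mono_on_of_le_Ioo hb
    ((continuous_max_mul_abs_rpow hM).intervalIntegrable _ _)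
    ((intervalIntegral.intervalIntegrable_rpow' (by linarith)).const_mul _) hle).trans_eq ?_
  rw [intervalIntegral.integral_const_mul, integral_rpow (Or.inl (by linarith)),
    Real.zero_rpow (by linarith), sub_zero, neg_add_eq_sub]

lemma integral_max_mul_abs_rpow_le (hc : 0 < c) (hM : 0 < M) (hα0 : 0 ≤ α) (hα1 : α < 1)
    {a b : ℝ} (ha : a ≤ 0) (hb : 0 ≤ b) :
    ∫ s in a..b, max (c * |s|) M ^ (-α)
      ≤ c ^ (-α) * (((-a) ^ (1 - α) + b ^ (1 - α)) / (1 - α)) := by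
  have hint (a b : ℝ) : IntervalIntegrable (fun s => max (c * |s|) M ^ (-α)) volume a b :=
    (continuous_max_mul_abs_rpow hM).intervalIntegrable a b
  have hreflect : ∫ s in a..0, max (c * |s|) M ^ (-α)
      = ∫ s in (0 : ℝ)..(-a), max (c * |s|) M ^ (-α) := by
    simpa using (intervalIntegral.integral_comp_neg (a := 0) (b := -a)
      fun s => max (c * |s|) M ^ (-α)).symm
  rw [← intervalIntegral.integral_add_adjacent_intervals (hint a 0) (hint 0 b), hreflect]
  have := integral_zero_max_mul_abs_rpow_le hc hM hα0 hα1 (neg_nonneg.2 ha)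
  have := integral_zero_max_mul_abs_rpow_le hc hM hα0 hα1 hb
  rw [add_div, mul_add]
  linarith

lemma integral_max_mul_abs_rpow_le_two_mul (hc : 1 < c) (hM : 0 < M) (hα0 : 0 ≤ α)
    (hα1 : α < 1) (hg : (c + 1) ^ (1 - α) + (c - 1) ^ (1 - α) ≤ 2 * c * (1 - α)) (x : ℝ) :
    ∫ s in (x - max (c * |x|) M)..(x + max (c * |x|) M), max (c * |s|) M ^ (-α)
      ≤ 2 * max (c * |x|) M * max (c * |x|) M ^ (-α) := by
  rcases le_or_gt (c * |x|) M with hxM | hxM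
  · rw [max_eq_right hxM]
    exact (integral_max_mul_abs_rpow_le_mul hM hα0 (by linarith)).trans_eq (by ring)
  rw [max_eq_left hxM.le]
  have hx : 0 < |x| := pos_of_mul_pos_right (hM.trans hxM) (by linarith)
  have hends : (-(x - c * |x|)) ^ (1 - α) + (x + c * |x|) ^ (1 - α)
      = ((c + 1) ^ (1 - α) + (c - 1) ^ (1 - α)) * |x| ^ (1 - α) := by
    rw [add_mul, ← Real.mul_rpow (by linarith) hx.le, ← Real.mul_rpow (by linarith) hx.le]
    rcases abs_choice x with h | h <;> rw [h]
    · rw [add_comm]; congr 2 <;> ring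
    · congr 2 <;> ring
  have hcx : |x| ≤ c * |x| := le_mul_of_one_le_left hx.le hc.le
  have hpow : |x| ^ (1 - α) = |x| * |x| ^ (-α) := by
    rw [sub_eq_add_neg, Real.rpow_add hx, Real.rpow_one]
  calc _ ≤ c ^ (-α) * (((-(x - c * |x|)) ^ (1 - α) + (x + c * |x|) ^ (1 - α)) / (1 - α)) :=
        integral_max_mul_abs_rpow_le (by linarith) hM hα0 hα1
          (by linarith [le_abs_self x]) (by linarith [neg_abs_le x])
    _ = c ^ (-α) * |x| ^ (1 - α) * ((c + 1) ^ (1 - α) + (c - 1) ^ (1 - α)) / (1 - α) := by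
        rw [hends]; ring
    _ ≤ c ^ (-α) * |x| ^ (1 - α) * (2 * c * (1 - α)) / (1 - α) := by gcongr
    _ = 2 * (c * |x|) * (c * |x|) ^ (-α) := by
        rw [Real.mul_rpow (by linarith) hx.le, hpow]
        field_simp [show 1 - α ≠ 0 by linarith]

end Integral

/-- Proposition 1.4.2: with `c₀` the unique zero of `ψ` in `(1,∞)`, if `c > c₀`,
`M > 0` and `r := max(c|·|, M)`, then there is `α ∈ (0,1)` such that `r^{-α}` is
`(λ,r)`-supermedian on `ℝ`. -/
theorem stmt5 (c₀ c M : ℝ) (hc₀1 : 1 < c₀) (hc₀ : psi c₀ = 0) (hc : c₀ < c)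
    (hM : 0 < M) :
    ∃ α : ℝ, 0 < α ∧ α < 1 ∧ ∀ x : ℝ,
      (1 / (2 * max (c * |x|) M)) *
        (∫ s in (x - max (c * |x|) M)..(x + max (c * |x|) M),
          (max (c * |s|) M) ^ (-α))
      ≤ (max (c * |x|) M) ^ (-α) := by
  have hc1 : 1 < c := hc₀1.trans hc
  obtain ⟨α, hα0, hα1, hg⟩ :=
    exists_rpow_one_sub_add_rpow_one_sub_le hc1 (psi_pos_of_lt hc₀1 hc₀ hc)
  refine ⟨α, hα0, hα1, fun x => ?_⟩
  have hr : 0 < max (c * |x|) M := hM.trans_le (le_max_right _ _)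
  rw [one_div, inv_mul_le_iff₀ (mul_pos two_pos hr)]
  exact integral_max_mul_abs_rpow_le_two_mul hc1 hM hα0.le hα1 hg x
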